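/- Let x, y be elements of the graph group G_F with x ≤ y, and let α be a symbol that does not occur in x⁻¹y. Then |xp⁻¹| ≤ |yp⁻¹| for each α-peak p. -/

import Mathlib

/-!
Elements of the graph group are represented by reduced words, which are unique up to swapping
adjacent commuting letters; uniqueness comes from letting the group act on such classes. Along a
reduced word of `x⁻¹y`, none of whose letters is `α`, it suffices to compare `x` with `xγ` where
`|xγ| = |x| + 1` and `γ ≠ α`. Cancel a reduced word of `xγ` against one of `p⁻¹`: if `γ` were
cancelled it would be a maximal symbol of the `α`-peak `p`, so it survives in the reduced form of
`xγp⁻¹`, and deleting it yields a word for `xp⁻¹` that is one letter shorter.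
-/

open Pointwise

namespace GraphGroupPaper

/-- The set of commutator relators: `gᵢ` and `gⱼ` commute for every pair of distinct
`i, j` with `{i,j} ∉ F`. -/
def Rels (k : ℕ) (F : Set (Sym2 (Fin k))) : Set (FreeGroup (Fin k)) :=
  {w | ∃ i j : Fin k, i ≠ j ∧ s(i, j) ∉ F ∧
      w = FreeGroup.of i * FreeGroup.of j * (FreeGroup.of i)⁻¹ * (FreeGroup.of j)⁻¹}

/-- The graph group `G_F` with generators `g₁, …, g_k` and relations `gᵢgⱼ = gⱼgᵢ`
for all distinct `i, j` with `{i,j} ∉ F`. -/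
abbrev Grp (k : ℕ) (F : Set (Sym2 (Fin k))) := PresentedGroup (Rels k F)

/-- The generator `gᵢ` of the graph group. -/
def gen (k : ℕ) (F : Set (Sym2 (Fin k))) (i : Fin k) : Grp k F :=
  PresentedGroup.of i

/-- The group element corresponding to a symbol: `(i, true)` stands for `gᵢ`,
`(i, false)` stands for `gᵢ⁻¹`. -/
def sym (k : ℕ) (F : Set (Sym2 (Fin k))) (α : Fin k × Bool) : Grp k F :=
  if α.2 then gen k F α.1 else (gen k F α.1)⁻¹

/-- The product of the word `l` of symbols, as an element of the graph group. -/
def wordProd (k : ℕ) (F : Set (Sym2 (Fin k))) (l : List (Fin k × Bool)) : Grp k F :=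
  (l.map (sym k F)).prod

/-- `|x|` : the length of a shortest word in the symbols representing `x`. -/
noncomputable def len {k : ℕ} {F : Set (Sym2 (Fin k))} (x : Grp k F) : ℕ :=
  sInf {n | ∃ l : List (Fin k × Bool), wordProd k F l = x ∧ l.length = n}

/-- The partial order on `G_F`:  `x ≤ y` iff `|y| = |x| + |x⁻¹y|`. -/
def le {k : ℕ} {F : Set (Sym2 (Fin k))} (x y : Grp k F) : Prop :=
  len y = len x + len (x⁻¹ * y)

/-- `m` is the meet `x ∧ y` (greatest lower bound w.r.t. `le`). -/
def IsMeet {k : ℕ} {F : Set (Sym2 (Fin k))} (x y m : Grp k F) : Prop :=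
  le m x ∧ le m y ∧ ∀ w, le w x → le w y → le w m

/-- `j` is the (finite) join `x ∨ y` (least upper bound w.r.t. `le`);
`x ∨ y` is finite iff such a `j` exists. -/
def IsJoin {k : ℕ} {F : Set (Sym2 (Fin k))} (x y j : Grp k F) : Prop :=
  le x j ∧ le y j ∧ ∀ w, le x w → le y w → le j w

/-- `j` is the (finite) join of the set `S`. -/
def IsJoinSet {k : ℕ} {F : Set (Sym2 (Fin k))} (S : Set (Grp k F)) (j : Grp k F) : Prop :=
  (∀ s ∈ S, le s j) ∧ ∀ w, (∀ s ∈ S, le s w) → le j w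

/-- `y` is a segment of `a` if `a = x·y·z` for some `x, z`. -/
def Segment {k : ℕ} {F : Set (Sym2 (Fin k))} (y a : Grp k F) : Prop :=
  ∃ x z, a = x * y * z ∧ len a = len x + len y + len z

/-- The left-invariant metric `dist(x,y) = |x⁻¹y|`. -/
noncomputable def dist {k : ℕ} {F : Set (Sym2 (Fin k))} (x y : Grp k F) : ℕ :=
  len (x⁻¹ * y)

/-- A nonempty set `L` is convex if `x, z ∈ L` and `dist(x,y) + dist(y,z) = dist(x,z)`
imply `y ∈ L`. -/
def ConvexSet {k : ℕ} {F : Set (Sym2 (Fin k))} (L : Set (Grp k F)) : Prop :=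
  L.Nonempty ∧ ∀ x z y : Grp k F, x ∈ L → z ∈ L →
    dist x y + dist y z = dist x z → y ∈ L

/-- An ideal: nonempty, downward closed, and closed under finite joins. -/
def IdealSet {k : ℕ} {F : Set (Sym2 (Fin k))} (I : Set (Grp k F)) : Prop :=
  I.Nonempty ∧ (∀ x ∈ I, ∀ y, le y x → y ∈ I) ∧
    (∀ x ∈ I, ∀ y ∈ I, ∀ j, IsJoin x y j → j ∈ I)

/-- `H` is closed if both `H` and `H⁻¹` are ideals. -/
def ClosedSet {k : ℕ} {F : Set (Sym2 (Fin k))} (H : Set (Grp k F)) : Prop :=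
  IdealSet H ∧ IdealSet H⁻¹

/-- `m` is a minimal element of `S` w.r.t. `le`. -/
def MinimalIn {k : ℕ} {F : Set (Sym2 (Fin k))} (S : Set (Grp k F)) (m : Grp k F) : Prop :=
  m ∈ S ∧ ∀ x ∈ S, le x m → x = m

/-- `l` is a reduced (i.e. shortest) word representing `x`. -/
def MinWord {k : ℕ} {F : Set (Sym2 (Fin k))} (x : Grp k F) (l : List (Fin k × Bool)) : Prop :=
  wordProd k F l = x ∧ l.length = len x

open Classical in
/-- `#_α(x)`: the number of occurrences of the symbol `α` (not counting `α⁻¹`)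
in a reduced word representing `x`. -/
noncomputable def symCount {k : ℕ} {F : Set (Sym2 (Fin k))} (α : Fin k × Bool)
    (x : Grp k F) : ℕ :=
  if h : ∃ l, MinWord x l then h.choose.count α else 0

/-- The symbol `α` occurs in `x`. -/
def Occurs {k : ℕ} {F : Set (Sym2 (Fin k))} (α : Fin k × Bool) (x : Grp k F) : Prop :=
  0 < symCount α x

/-- `α` is a maximal symbol of `x`, i.e. `xα⁻¹ ≤ x`. -/
def MaxSym {k : ℕ} {F : Set (Sym2 (Fin k))} (α : Fin k × Bool) (x : Grp k F) : Prop :=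
  le (x * (sym k F α)⁻¹) x

/-- A peak: an element with precisely one maximal symbol. -/
def IsPeak {k : ℕ} {F : Set (Sym2 (Fin k))} (p : Grp k F) : Prop :=
  ∃! α : Fin k × Bool, MaxSym α p

/-- An `α`-peak: a peak whose unique maximal symbol is `α`. -/
def AlphaPeak {k : ℕ} {F : Set (Sym2 (Fin k))} (α : Fin k × Bool) (p : Grp k F) : Prop :=
  MaxSym α p ∧ ∀ β, MaxSym β p → β = α

/-- The set of generator indices occurring in `b`. -/
def Support {k : ℕ} {F : Set (Sym2 (Fin k))} (b : Grp k F) : Set (Fin k) :=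
  {i | Occurs (i, true) b ∨ Occurs (i, false) b}

/-- `b` is connected: the generators occurring in `b` induce a connected subgraph of
the graph `([k], F)`. -/
def Conn {k : ℕ} {F : Set (Sym2 (Fin k))} (b : Grp k F) : Prop :=
  (SimpleGraph.induce (Support b) (SimpleGraph.fromEdgeSet F)).Connected

/-- `b` is cyclically reduced: `b ∧ b⁻¹ = 1`. -/
def CycRed {k : ℕ} {F : Set (Sym2 (Fin k))} (b : Grp k F) : Prop :=
  IsMeet b b⁻¹ 1

section SwapEquiv

variable {σ : Type*} (G : SimpleGraph σ)

def SwapStep (l l' : List σ) : Prop :=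
  ∃ A B a b, G.Adj a b ∧ l = A ++ a :: b :: B ∧ l' = A ++ b :: a :: B

def SwapEquiv : List σ → List σ → Prop := Relation.ReflTransGen (SwapStep G)

def MovesToFront (d : σ) : List σ → Prop
  | [] => False
  | c :: t => c = d ∨ (G.Adj d c ∧ MovesToFront d t)

def MovesToEnd (d : σ) (l : List σ) : Prop := MovesToFront G d l.reverse

variable {G} {l m l' : List σ}

lemma SwapStep.symm (h : SwapStep G l m) : SwapStep G m l := by
  obtain ⟨A, B, a, b, hab, rfl, rfl⟩ := h
  exact ⟨A, B, b, a, hab.symm, rfl, rfl⟩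

lemma SwapStep.perm (h : SwapStep G l m) : l.Perm m := by
  obtain ⟨A, B, a, b, -, rfl, rfl⟩ := h
  exact (List.Perm.swap b a B).append_left A

lemma SwapStep.reverse (h : SwapStep G l m) : SwapStep G l.reverse m.reverse := by
  obtain ⟨A, B, a, b, hab, rfl, rfl⟩ := h
  exact ⟨B.reverse, A.reverse, b, a, hab.symm, by simp, by simp⟩

lemma SwapStep.append (h : SwapStep G l m) (u v : List σ) :
    SwapStep G (u ++ l ++ v) (u ++ m ++ v) := by
  obtain ⟨A, B, a, b, hab, rfl, rfl⟩ := h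
  exact ⟨u ++ A, B ++ v, a, b, hab, by simp, by simp⟩

namespace SwapEquiv

@[refl] lemma refl (l : List σ) : SwapEquiv G l l := Relation.ReflTransGen.refl

lemma of_step (h : SwapStep G l m) : SwapEquiv G l m := Relation.ReflTransGen.single h

lemma trans (h : SwapEquiv G l m) (h' : SwapEquiv G m l') : SwapEquiv G l l' :=
  Relation.ReflTransGen.trans h h'

lemma symm (h : SwapEquiv G l m) : SwapEquiv G m l := by
  induction h with
  | refl => rfl
  | tail _ hs ih => exact (of_step hs.symm).trans ih

lemma imp_of_step {P : List σ → Prop} (hP : ∀ l m, SwapStep G l m → P l → P m)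
    (h : SwapEquiv G l m) (hl : P l) : P m := by
  induction h with
  | refl => exact hl
  | tail _ hs ih => exact hP _ _ hs ih

lemma iff_of_step {P : List σ → Prop} (hP : ∀ l m, SwapStep G l m → P l → P m)
    (h : SwapEquiv G l m) : P l ↔ P m :=
  ⟨h.imp_of_step hP, h.symm.imp_of_step hP⟩

lemma eq_of_step {β : Type*} {φ : List σ → β} (hφ : ∀ l m, SwapStep G l m → φ l = φ m)
    (h : SwapEquiv G l m) : φ l = φ m :=
  h.imp_of_step (P := fun m => φ l = φ m) (fun _ _ hs e => e.trans (hφ _ _ hs)) rfl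

lemma perm (h : SwapEquiv G l m) : l.Perm m :=
  h.imp_of_step (P := l.Perm) (fun _ _ hs p => p.trans hs.perm) (List.Perm.refl l)

lemma length_eq (h : SwapEquiv G l m) : l.length = m.length := h.perm.length_eq

lemma reverse (h : SwapEquiv G l m) : SwapEquiv G l.reverse m.reverse :=
  Relation.ReflTransGen.lift List.reverse (fun _ _ => SwapStep.reverse) _ _ h

lemma append_left (u : List σ) (h : SwapEquiv G l m) : SwapEquiv G (u ++ l) (u ++ m) :=
  Relation.ReflTransGen.lift (u ++ ·)
    (fun _ _ hs => by simpa using (hs : SwapStep G _ _).append u []) _ _ h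

lemma append_right (h : SwapEquiv G l m) (v : List σ) : SwapEquiv G (l ++ v) (m ++ v) :=
  Relation.ReflTransGen.lift (· ++ v)
    (fun _ _ hs => by simpa using (hs : SwapStep G _ _).append [] v) _ _ h

lemma cons (c : σ) (h : SwapEquiv G l m) : SwapEquiv G (c :: l) (c :: m) :=
  h.append_left [c]

lemma prod_map_eq {M : Type*} [Monoid M] (f : σ → M)
    (hf : ∀ a b, G.Adj a b → Commute (f a) (f b)) (h : SwapEquiv G l m) :
    (l.map f).prod = (m.map f).prod := by
  refine h.eq_of_step (φ := fun l => (l.map f).prod) fun _ _ hs => ?_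
  obtain ⟨A, B, a, b, hab, hl, hm⟩ := hs
  simp only [hl, hm, List.map_append, List.map_cons, List.prod_append, List.prod_cons,
    ← mul_assoc, (hf a b hab).eq]

end SwapEquiv

lemma swapEquiv_cons_append_singleton {a : σ} {t : List σ} (h : ∀ b ∈ t, G.Adj a b) :
    SwapEquiv G (a :: t) (t ++ [a]) := by
  induction t with
  | nil => rfl
  | cons c t ih =>
    refine (SwapEquiv.of_step ⟨[], t, a, c, h c (by simp), rfl, rfl⟩).trans ?_
    exact (ih fun b hb => h b (by simp [hb])).cons c

lemma movesToFront_append {d : σ} {s t : List σ} :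
    MovesToFront G d (s ++ t) ↔
      MovesToFront G d s ∨ (∀ b ∈ s, G.Adj d b) ∧ MovesToFront G d t := by
  induction s with
  | nil => simp [MovesToFront]
  | cons c s ih =>
    simp only [List.cons_append, MovesToFront, ih, List.mem_cons, forall_eq_or_imp]
    tauto

lemma movesToFront_cons_of_adj {d c : σ} {l : List σ} (h : G.Adj d c) :
    MovesToFront G d (c :: l) ↔ MovesToFront G d l := by
  simp [MovesToFront, h, h.ne']

lemma SwapStep.movesToFront {d : σ} (h : SwapStep G l m) (hl : MovesToFront G d l) :
    MovesToFront G d m := by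
  obtain ⟨A, B, a, b, hab, rfl, rfl⟩ := h
  rw [movesToFront_append] at hl ⊢
  refine hl.imp_right (And.imp_right fun h => ?_)
  simp only [MovesToFront] at h ⊢
  rcases h with rfl | ⟨hda, rfl | h⟩
  · exact .inr ⟨hab, .inl rfl⟩
  · exact .inl rfl
  · exact .inr ⟨h.1, .inr ⟨hda, h.2⟩⟩

lemma SwapEquiv.movesToFront_iff {d : σ} (h : SwapEquiv G l m) :
    MovesToFront G d l ↔ MovesToFront G d m :=
  h.iff_of_step fun _ _ hs => hs.movesToFront

lemma SwapEquiv.movesToEnd_iff {d : σ} (h : SwapEquiv G l m) :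
    MovesToEnd G d l ↔ MovesToEnd G d m :=
  h.reverse.movesToFront_iff

lemma movesToEnd_append {d : σ} {s t : List σ} :
    MovesToEnd G d (s ++ t) ↔
      MovesToEnd G d t ∨ (∀ b ∈ t, G.Adj d b) ∧ MovesToEnd G d s := by
  simp [MovesToEnd, movesToFront_append]

lemma movesToEnd_append_singleton (d : σ) (l : List σ) : MovesToEnd G d (l ++ [d]) := by
  simp [MovesToEnd, MovesToFront]

section Erase

variable [BEq σ] [LawfulBEq σ]

lemma MovesToFront.swapEquiv_cons_erase {d : σ} {t : List σ} (h : MovesToFront G d t) :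
    SwapEquiv G t (d :: t.erase d) := by
  induction t with
  | nil => exact h.elim
  | cons c t ih =>
    rcases h with rfl | ⟨hdc, ht⟩
    · simp [SwapEquiv.refl]
    rw [List.erase_cons_tail (by simpa using hdc.ne')]
    exact ((ih ht).cons c).trans (.of_step ⟨[], _, c, d, hdc.symm, rfl, rfl⟩)

lemma MovesToFront.erase_iff {d e : σ} (hd : MovesToFront G d l) (hed : G.Adj e d) :
    MovesToFront G e (l.erase d) ↔ MovesToFront G e l := by
  rw [hd.swapEquiv_cons_erase.movesToFront_iff, movesToFront_cons_of_adj hed]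

end Erase

section Projection

variable [DecidableEq σ]

def projPair (a b : σ) (l : List σ) : List σ := l.filter fun c => c = a ∨ c = b

lemma projPair_cons (a b c : σ) (l : List σ) :
    projPair a b (c :: l) = if c = a ∨ c = b then c :: projPair a b l else projPair a b l := by
  by_cases h : c = a ∨ c = b <;> simp [projPair, h]

lemma projPair_append (a b : σ) (l m : List σ) :
    projPair a b (l ++ m) = projPair a b l ++ projPair a b m :=
  List.filter_append ..

lemma SwapEquiv.projPair_eq (h : SwapEquiv G l m) {a b : σ} (hab : ¬ G.Adj a b) :
    projPair a b l = projPair a b m := by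
  refine h.eq_of_step (φ := projPair a b) fun _ _ hs => ?_
  obtain ⟨A, B, x, y, hxy, rfl, rfl⟩ := hs
  simp only [projPair_append, projPair_cons]
  by_cases hx : x = a ∨ x = b <;> by_cases hy : y = a ∨ y = b <;> simp only [hx, hy, if_true,
    if_false]
  rcases hx with rfl | rfl <;> rcases hy with rfl | rfl
  exacts [(G.irrefl hxy).elim, (hab hxy).elim, (hab hxy.symm).elim, (G.irrefl hxy).elim]

lemma movesToFront_of_projPair {c : σ} {m : List σ}
    (h : ∀ b, ¬ G.Adj c b → (projPair c b m).head? = some c) : MovesToFront G c m := by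
  induction m with
  | nil => simpa [projPair] using h c (G.irrefl)
  | cons d t ih =>
    by_cases hdc : d = c
    · exact .inl hdc
    have hcd : G.Adj c d := by
      by_contra hcd
      simpa [projPair_cons, hdc] using h d hcd
    refine .inr ⟨hcd, ih fun b hb => ?_⟩
    have hdb : d ≠ b := by rintro rfl; exact hb hcd
    simpa [projPair_cons, hdc, hdb] using h b hb

/-- The projection lemma for partially commutative words. -/
lemma swapEquiv_of_projPair_eq {l m : List σ}
    (h : ∀ a b, ¬ G.Adj a b → projPair a b l = projPair a b m) : SwapEquiv G l m := by
  induction l generalizing m with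
  | nil =>
    cases m with
    | nil => rfl
    | cons d t => exact absurd (h d d G.irrefl) (by simp [projPair])
  | cons c l ih =>
    have hfront : MovesToFront G c m :=
      movesToFront_of_projPair fun b hb => by simp [← h c b hb, projPair_cons]
    have hm := hfront.swapEquiv_cons_erase
    refine ((ih fun a b hab => ?_).cons c).trans hm.symm
    have hproj := h a b hab
    rw [hm.projPair_eq hab, projPair_cons, projPair_cons] at hproj
    split_ifs at hproj
    exacts [List.cons_injective hproj, hproj]

end Projection

lemma SwapEquiv.append_cancel_left {u : List σ} (h : SwapEquiv G (u ++ l) (u ++ m)) :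
    SwapEquiv G l m := by
  classical
  exact swapEquiv_of_projPair_eq fun _ _ hab =>
    List.append_cancel_left (by simpa only [projPair_append] using h.projPair_eq hab)

lemma SwapEquiv.append_cancel_right {v : List σ} (h : SwapEquiv G (l ++ v) (m ++ v)) :
    SwapEquiv G l m := by
  classical
  exact swapEquiv_of_projPair_eq fun _ _ hab =>
    List.append_cancel_right (by simpa only [projPair_append] using h.projPair_eq hab)

lemma MovesToEnd.exists_swapEquiv {d : σ} (h : MovesToEnd G d l) :
    ∃ u, SwapEquiv G l (u ++ [d]) := by
  classical
  exact ⟨(l.reverse.erase d).reverse, by simpa using h.swapEquiv_cons_erase.reverse⟩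

lemma SwapEquiv.append_singleton_cases {d : σ} {A S : List σ}
    (h : SwapEquiv G (l ++ [d]) (A ++ S)) :
    (∃ S₀, SwapEquiv G S (S₀ ++ [d]) ∧ SwapEquiv G l (A ++ S₀)) ∨
      ∃ A₀, SwapEquiv G A (A₀ ++ [d]) ∧ SwapEquiv G l (A₀ ++ S) := by
  rcases movesToEnd_append.1 (h.movesToEnd_iff.1 (movesToEnd_append_singleton d l)) with
    hS | ⟨hSd, hA⟩
  · obtain ⟨S₀, hS₀⟩ := hS.exists_swapEquiv
    refine .inl ⟨S₀, hS₀, SwapEquiv.append_cancel_right (v := [d]) ?_⟩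
    simpa using h.trans (hS₀.append_left A)
  · obtain ⟨A₀, hA₀⟩ := hA.exists_swapEquiv
    refine .inr ⟨A₀, hA₀, SwapEquiv.append_cancel_right (v := [d]) ?_⟩
    refine h.trans ((hA₀.append_right S).trans ?_)
    simpa using (swapEquiv_cons_append_singleton hSd).append_left A₀

end SwapEquiv

section ReducedWords

variable {α : Type*} (G : SimpleGraph α)

def letterGraph : SimpleGraph (α × Bool) := G.comap Prod.fst

def invLetter (c : α × Bool) : α × Bool := (c.1, !c.2)

def Reduced : List (α × Bool) → Prop
  | [] => True
  | c :: t => ¬ MovesToFront (letterGraph G) (invLetter c) t ∧ Reduced t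

variable {G}

@[simp] lemma letterGraph_adj {c d : α × Bool} : (letterGraph G).Adj c d ↔ G.Adj c.1 d.1 :=
  Iff.rfl

@[simp] lemma invLetter_fst (c : α × Bool) : (invLetter c).1 = c.1 := rfl

@[simp] lemma invLetter_invLetter (c : α × Bool) : invLetter (invLetter c) = c := by
  simp [invLetter]

lemma invRev_eq_map_invLetter (l : List (α × Bool)) :
    FreeGroup.invRev l = (l.map invLetter).reverse := rfl

lemma reduced_cons {c : α × Bool} {t : List (α × Bool)} :
    Reduced G (c :: t) ↔ ¬ MovesToFront (letterGraph G) (invLetter c) t ∧ Reduced G t :=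
  Iff.rfl

lemma reduced_nil : Reduced G [] := trivial

lemma reduced_singleton (c : α × Bool) : Reduced G [c] := by
  simp [Reduced, MovesToFront]

lemma Reduced.of_append {s t : List (α × Bool)} (h : Reduced G (s ++ t)) :
    Reduced G s ∧ Reduced G t := by
  induction s with
  | nil => exact ⟨reduced_nil, h⟩
  | cons c s ih =>
    rw [List.cons_append, reduced_cons, movesToFront_append] at h
    exact ⟨⟨fun hs => h.1 (.inl hs), (ih h.2).1⟩, (ih h.2).2⟩

lemma SwapStep.reduced {l m : List (α × Bool)} (h : SwapStep (letterGraph G) l m)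
    (hl : Reduced G l) : Reduced G m := by
  obtain ⟨A, B, a, b, hab, rfl, rfl⟩ := h
  induction A with
  | nil =>
    have hba : (letterGraph G).Adj (invLetter b) a := hab.symm
    have hab' : (letterGraph G).Adj (invLetter a) b := hab
    simp only [List.nil_append, reduced_cons, movesToFront_cons_of_adj hba,
      movesToFront_cons_of_adj hab'] at hl ⊢
    tauto
  | cons c A ih =>
    simp only [List.cons_append, reduced_cons] at hl ⊢
    exact ⟨mt (SwapStep.movesToFront ⟨A, B, b, a, hab.symm, rfl, rfl⟩) hl.1, ih hl.2⟩

lemma SwapEquiv.reduced_iff {l m : List (α × Bool)} (h : SwapEquiv (letterGraph G) l m) :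
    Reduced G l ↔ Reduced G m :=
  h.iff_of_step fun _ _ hs => hs.reduced

lemma SwapEquiv.invRev {l m : List (α × Bool)} (h : SwapEquiv (letterGraph G) l m) :
    SwapEquiv (letterGraph G) (FreeGroup.invRev l) (FreeGroup.invRev m) := by
  refine Relation.ReflTransGen.lift FreeGroup.invRev (fun _ _ hs => ?_) _ _ h
  obtain ⟨A, B, a, b, hab, rfl, rfl⟩ := hs
  exact ⟨FreeGroup.invRev B, FreeGroup.invRev A, invLetter b, invLetter a, hab.symm,
    by simp [invRev_eq_map_invLetter], by simp [invRev_eq_map_invLetter]⟩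

lemma exists_swapEquiv_of_not_reduced {l : List (α × Bool)} (h : ¬ Reduced G l) :
    ∃ A c t, SwapEquiv (letterGraph G) l (A ++ c :: invLetter c :: t) := by
  classical
  induction l with
  | nil => exact (h reduced_nil).elim
  | cons c t ih =>
    rw [reduced_cons, not_and_or, not_not] at h
    rcases h with hc | ht
    · exact ⟨[], c, _, hc.swapEquiv_cons_erase.cons c⟩
    · obtain ⟨A, d, u, hu⟩ := ih ht
      exact ⟨c :: A, d, u, hu.cons c⟩

lemma exists_swapEquiv_of_not_reduced_append {U V : List (α × Bool)} (hU : Reduced G U)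
    (hV : Reduced G V) (h : ¬ Reduced G (U ++ V)) :
    ∃ c U' V', SwapEquiv (letterGraph G) U (U' ++ [c]) ∧
      SwapEquiv (letterGraph G) V (invLetter c :: V') := by
  classical
  induction U with
  | nil => exact (h hV).elim
  | cons a t ih =>
    rw [List.cons_append, reduced_cons, not_and_or, not_not, movesToFront_append] at h
    rcases h with (ha | ⟨hadj, hV'⟩) | ht
    · exact (hU.1 ha).elim
    · refine ⟨a, t, _, swapEquiv_cons_append_singleton fun b hb => ?_,
        hV'.swapEquiv_cons_erase⟩
      simpa using hadj b hb
    · obtain ⟨c, U', V', hU', hV'⟩ := ih hU.2 ht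
      exact ⟨c, a :: U', V', hU'.cons a, hV'⟩

lemma exists_reduced_append_cancel {U V : List (α × Bool)} (hU : Reduced G U)
    (hV : Reduced G V) :
    ∃ A S B, SwapEquiv (letterGraph G) U (A ++ S) ∧
      SwapEquiv (letterGraph G) V (FreeGroup.invRev S ++ B) ∧ Reduced G (A ++ B) := by
  by_cases h : Reduced G (U ++ V)
  · exact ⟨U, [], V, by simpa using .refl U, by simpa using .refl V, h⟩
  obtain ⟨c, U', V', hUc, hVc⟩ := exists_swapEquiv_of_not_reduced_append hU hV h
  have hlen : U'.length < U.length := by simp [hUc.length_eq]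
  obtain ⟨A, S, B, hA, hB, hAB⟩ := exists_reduced_append_cancel
    ((hUc.reduced_iff.1 hU).of_append.1) (hVc.reduced_iff.1 hV).2
  refine ⟨A, S ++ [c], B, hUc.trans ?_, hVc.trans ?_, hAB⟩
  · simpa using hA.append_right [c]
  · simpa [invRev_eq_map_invLetter] using hB.cons (invLetter c)
termination_by U.length

section Action

variable [DecidableEq α]

variable (G) in
open Classical in
noncomputable def mulLetter (c : α × Bool) (l : List (α × Bool)) : List (α × Bool) :=
  if MovesToFront (letterGraph G) (invLetter c) l then l.erase (invLetter c) else c :: l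

lemma mulLetter_of_movesToFront {c : α × Bool} {l : List (α × Bool)}
    (h : MovesToFront (letterGraph G) (invLetter c) l) :
    mulLetter G c l = l.erase (invLetter c) :=
  if_pos h

lemma mulLetter_of_not_movesToFront {c : α × Bool} {l : List (α × Bool)}
    (h : ¬ MovesToFront (letterGraph G) (invLetter c) l) : mulLetter G c l = c :: l :=
  if_neg h

lemma reduced_mulLetter {l : List (α × Bool)} (hl : Reduced G l) (c : α × Bool) :
    Reduced G (mulLetter G c l) := by
  by_cases h : MovesToFront (letterGraph G) (invLetter c) l
  · rw [mulLetter_of_movesToFront h]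
    exact (h.swapEquiv_cons_erase.reduced_iff.1 hl).2
  · rw [mulLetter_of_not_movesToFront h]
    exact ⟨h, hl⟩

lemma SwapEquiv.mulLetter {l m : List (α × Bool)} (h : SwapEquiv (letterGraph G) l m)
    (c : α × Bool) : SwapEquiv (letterGraph G) (mulLetter G c l) (mulLetter G c m) := by
  by_cases hl : MovesToFront (letterGraph G) (invLetter c) l
  · have hm := h.movesToFront_iff.1 hl
    rw [mulLetter_of_movesToFront hl, mulLetter_of_movesToFront hm]
    exact SwapEquiv.append_cancel_left (u := [invLetter c]) <| by
      simpa using ((hl.swapEquiv_cons_erase.symm.trans h).trans hm.swapEquiv_cons_erase)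
  · rw [mulLetter_of_not_movesToFront hl,
      mulLetter_of_not_movesToFront (mt h.movesToFront_iff.2 hl)]
    exact h.cons c

lemma mulLetter_invLetter_mulLetter {l : List (α × Bool)} (hl : Reduced G l)
    (c : α × Bool) :
    SwapEquiv (letterGraph G) (mulLetter G (invLetter c) (mulLetter G c l)) l := by
  by_cases h : MovesToFront (letterGraph G) (invLetter c) l
  · have hc : ¬ MovesToFront (letterGraph G) c (l.erase (invLetter c)) := fun hc =>
      (h.swapEquiv_cons_erase.reduced_iff.1 hl).1 (by simpa using hc)
    rw [mulLetter_of_movesToFront h, mulLetter_of_not_movesToFront (by simpa using hc)]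
    exact h.swapEquiv_cons_erase.symm
  · rw [mulLetter_of_not_movesToFront h,
      mulLetter_of_movesToFront (by simp [MovesToFront]), invLetter_invLetter,
      List.erase_cons_head]

lemma movesToFront_mulLetter_iff {c e : α × Bool} {l : List (α × Bool)} (h : G.Adj e.1 c.1) :
    MovesToFront (letterGraph G) e (mulLetter G c l) ↔ MovesToFront (letterGraph G) e l := by
  by_cases hc : MovesToFront (letterGraph G) (invLetter c) l
  · rw [mulLetter_of_movesToFront hc, hc.erase_iff (by simpa using h)]
  · rw [mulLetter_of_not_movesToFront hc, movesToFront_cons_of_adj (by simpa using h)]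

lemma swapEquiv_mulLetter_cons {c d : α × Bool} {l : List (α × Bool)} (h : G.Adj c.1 d.1) :
    SwapEquiv (letterGraph G) (mulLetter G c (d :: l)) (d :: mulLetter G c l) := by
  by_cases hc : MovesToFront (letterGraph G) (invLetter c) l
  · rw [mulLetter_of_movesToFront hc, mulLetter_of_movesToFront
      ((movesToFront_cons_of_adj (by simpa using h)).2 hc),
      List.erase_cons_tail (by simpa using (show (letterGraph G).Adj (invLetter c) d from h).ne')]
  · rw [mulLetter_of_not_movesToFront hc, mulLetter_of_not_movesToFront
      (mt (movesToFront_cons_of_adj (by simpa using h)).1 hc)]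
    exact .of_step ⟨[], l, c, d, h, rfl, rfl⟩

lemma mulLetter_erase {c e : α × Bool} {l : List (α × Bool)} (h : G.Adj c.1 e.1)
    (he : MovesToFront (letterGraph G) e l) :
    mulLetter G c (l.erase e) = (mulLetter G c l).erase e := by
  by_cases hc : MovesToFront (letterGraph G) (invLetter c) l
  · rw [mulLetter_of_movesToFront hc, mulLetter_of_movesToFront
      ((he.erase_iff (by simpa using h)).2 hc), List.erase_comm]
  · rw [mulLetter_of_not_movesToFront hc, mulLetter_of_not_movesToFront
      (mt (he.erase_iff (by simpa using h)).1 hc),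
      List.erase_cons_tail (by simpa using (show (letterGraph G).Adj c e from h).ne)]

lemma swapEquiv_mulLetter_comm {c d : α × Bool} (h : G.Adj c.1 d.1) (l : List (α × Bool)) :
    SwapEquiv (letterGraph G) (mulLetter G c (mulLetter G d l))
      (mulLetter G d (mulLetter G c l)) := by
  by_cases hd : MovesToFront (letterGraph G) (invLetter d) l
  · rw [mulLetter_of_movesToFront hd, mulLetter_of_movesToFront
      ((movesToFront_mulLetter_iff (by simpa using h.symm)).2 hd),
      mulLetter_erase (e := invLetter d) h hd]
  · rw [mulLetter_of_not_movesToFront hd, mulLetter_of_not_movesToFront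
      (mt (movesToFront_mulLetter_iff (by simpa using h.symm)).1 hd)]
    exact swapEquiv_mulLetter_cons h

variable (G) in
def reducedSetoid : Setoid {l : List (α × Bool) // Reduced G l} where
  r l m := SwapEquiv (letterGraph G) l m
  iseqv := ⟨fun l => .refl l.1, .symm, .trans⟩

variable (G) in
abbrev NormalForm : Type _ := Quotient (reducedSetoid G)

noncomputable def letterPerm (c : α × Bool) : Equiv.Perm (NormalForm G) where
  toFun := Quotient.map (fun l => ⟨mulLetter G c l, reduced_mulLetter l.2 c⟩)
    fun _ _ h => SwapEquiv.mulLetter h c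
  invFun := Quotient.map (fun l => ⟨mulLetter G (invLetter c) l, reduced_mulLetter l.2 _⟩)
    fun _ _ h => SwapEquiv.mulLetter h _
  left_inv := Quotient.ind fun l => Quotient.sound (mulLetter_invLetter_mulLetter l.2 c)
  right_inv := Quotient.ind fun l => Quotient.sound <| by
    have h := mulLetter_invLetter_mulLetter l.2 (invLetter c)
    rwa [invLetter_invLetter] at h

lemma letterPerm_mk (c : α × Bool) (l : {l : List (α × Bool) // Reduced G l}) :
    letterPerm c (Quotient.mk _ l) = Quotient.mk _ ⟨mulLetter G c l, reduced_mulLetter l.2 c⟩ :=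
  rfl

lemma letterPerm_inv (c : α × Bool) : (letterPerm c)⁻¹ = letterPerm (G := G) (invLetter c) :=
  Equiv.ext fun _ => rfl

lemma letterPerm_commute {c d : α × Bool} (h : G.Adj c.1 d.1) :
    Commute (letterPerm (G := G) c) (letterPerm d) :=
  Equiv.ext <| Quotient.ind fun l => Quotient.sound (swapEquiv_mulLetter_comm h l)

end Action

end ReducedWords

section GraphGroup

variable {k : ℕ} {F : Set (Sym2 (Fin k))}

variable (F) in
def commGraph : SimpleGraph (Fin k) := (SimpleGraph.fromEdgeSet F)ᶜ

open scoped commutatorElement in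
lemma gen_commute {i j : Fin k} (h : (commGraph F).Adj i j) :
    Commute (gen k F i) (gen k F j) := by
  have hF : s(i, j) ∉ F := fun hF => by simp [commGraph, hF] at h
  have hr := PresentedGroup.one_of_mem (rels := Rels k F) ⟨i, j, h.ne, hF, rfl⟩
  rw [← commutatorElement_eq_one_iff_commute, commutatorElement_def]
  simpa [gen, PresentedGroup.of] using hr

lemma sym_commute {c d : Fin k × Bool} (h : (letterGraph (commGraph F)).Adj c d) :
    Commute (sym k F c) (sym k F d) := by
  have base := gen_commute h
  rcases c with ⟨i, _ | _⟩ <;> rcases d with ⟨j, _ | _⟩ <;>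
    simp only [sym, Bool.false_eq_true, if_false, if_true]
  exacts [base.inv_inv, base.inv_left, base.inv_right, base]

@[simp] lemma wordProd_nil : wordProd k F [] = 1 := rfl

@[simp] lemma wordProd_cons (c : Fin k × Bool) (l : List (Fin k × Bool)) :
    wordProd k F (c :: l) = sym k F c * wordProd k F l := by
  simp [wordProd]

@[simp] lemma wordProd_append (l m : List (Fin k × Bool)) :
    wordProd k F (l ++ m) = wordProd k F l * wordProd k F m := by
  simp [wordProd]

lemma sym_eq_mk (c : Fin k × Bool) :
    sym k F c = PresentedGroup.mk (Rels k F) (FreeGroup.mk [c]) := by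
  rcases c with ⟨i, _ | _⟩
  · exact (map_inv _ _).symm.trans (congrArg _ FreeGroup.inv_mk)
  · rfl

lemma wordProd_eq_mk (l : List (Fin k × Bool)) :
    wordProd k F l = PresentedGroup.mk (Rels k F) (FreeGroup.mk l) := by
  induction l with
  | nil => rfl
  | cons c l ih =>
    rw [wordProd_cons, ih, sym_eq_mk, ← map_mul, FreeGroup.mul_mk, List.singleton_append]

lemma exists_wordProd_eq (x : Grp k F) : ∃ l, wordProd k F l = x := by
  obtain ⟨w, rfl⟩ := PresentedGroup.mk_surjective _ x
  exact ⟨w.toWord, by rw [wordProd_eq_mk, FreeGroup.mk_toWord]⟩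

lemma wordProd_invRev (l : List (Fin k × Bool)) :
    wordProd k F (FreeGroup.invRev l) = (wordProd k F l)⁻¹ := by
  rw [wordProd_eq_mk, wordProd_eq_mk, ← FreeGroup.inv_mk, map_inv]

lemma SwapEquiv.wordProd_eq {l m : List (Fin k × Bool)}
    (h : SwapEquiv (letterGraph (commGraph F)) l m) : wordProd k F l = wordProd k F m :=
  h.prod_map_eq _ fun _ _ => sym_commute

variable (k F) in
/-- Van der Waerden's trick: evaluated at the empty word, this action recovers a reduced word
from its value, up to `SwapEquiv`. -/
noncomputable def normalFormAction : Grp k F →* Equiv.Perm (NormalForm (commGraph F)) :=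
  PresentedGroup.toGroup (f := fun i => letterPerm (i, true)) <| by
    rintro _ ⟨i, j, hij, hF, rfl⟩
    have hc := letterPerm_commute (G := commGraph F) (c := (i, true)) (d := (j, true))
      (by simp [commGraph, hij, hF])
    simp [hc.eq]

lemma normalFormAction_sym (c : Fin k × Bool) :
    normalFormAction k F (sym k F c) = letterPerm c := by
  rcases c with ⟨i, _ | _⟩
  · simp [sym, gen, normalFormAction, letterPerm_inv, invLetter]
  · simp [sym, gen, normalFormAction]

lemma normalFormAction_wordProd {r : List (Fin k × Bool)} (hr : Reduced (commGraph F) r) :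
    normalFormAction k F (wordProd k F r) (Quotient.mk _ ⟨[], reduced_nil⟩) =
      Quotient.mk _ ⟨r, hr⟩ := by
  induction r with
  | nil => rfl
  | cons c t ih =>
    rw [wordProd_cons, map_mul, Equiv.Perm.mul_apply, ih hr.2, normalFormAction_sym,
      letterPerm_mk]
    refine Quotient.sound (?_ : SwapEquiv _ (mulLetter (commGraph F) c t) (c :: t))
    rw [mulLetter_of_not_movesToFront hr.1]

lemma swapEquiv_of_wordProd_eq {r₁ r₂ : List (Fin k × Bool)} (h₁ : Reduced (commGraph F) r₁)
    (h₂ : Reduced (commGraph F) r₂) (h : wordProd k F r₁ = wordProd k F r₂) :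
    SwapEquiv (letterGraph (commGraph F)) r₁ r₂ :=
  have hmk : (Quotient.mk _ ⟨r₁, h₁⟩ : NormalForm (commGraph F)) = Quotient.mk _ ⟨r₂, h₂⟩ := by
    rw [← normalFormAction_wordProd h₁, h, normalFormAction_wordProd h₂]
  Quotient.exact hmk

lemma exists_shorter_of_not_reduced {l : List (Fin k × Bool)}
    (h : ¬ Reduced (commGraph F) l) :
    ∃ l', wordProd k F l' = wordProd k F l ∧ l'.length + 2 = l.length := by
  obtain ⟨A, c, t, hl⟩ := exists_swapEquiv_of_not_reduced h
  refine ⟨A ++ t, ?_, by simp [hl.length_eq]; omega⟩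
  rcases c with ⟨i, _ | _⟩ <;> simp [hl.wordProd_eq, sym, invLetter]

lemma exists_reduced_le (l : List (Fin k × Bool)) :
    ∃ r, Reduced (commGraph F) r ∧ wordProd k F r = wordProd k F l ∧ r.length ≤ l.length := by
  by_cases h : Reduced (commGraph F) l
  · exact ⟨l, h, rfl, le_rfl⟩
  obtain ⟨l', hl', hlen⟩ := exists_shorter_of_not_reduced h
  obtain ⟨r, hr, hrl, hrlen⟩ := exists_reduced_le l'
  exact ⟨r, hr, hrl.trans hl', by omega⟩
termination_by l.length

lemma exists_reduced (x : Grp k F) : ∃ r, Reduced (commGraph F) r ∧ wordProd k F r = x := by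
  obtain ⟨l, rfl⟩ := exists_wordProd_eq x
  obtain ⟨r, hr, hrl, -⟩ := exists_reduced_le l
  exact ⟨r, hr, hrl⟩

lemma len_le_length {l : List (Fin k × Bool)} {x : Grp k F} (h : wordProd k F l = x) :
    len x ≤ l.length :=
  Nat.sInf_le ⟨l, h, rfl⟩

lemma len_wordProd_of_reduced {r : List (Fin k × Bool)} (hr : Reduced (commGraph F) r) :
    len (wordProd k F r) = r.length := by
  refine (len_le_length rfl).antisymm ?_
  obtain ⟨l, hl, hlen⟩ := Nat.sInf_mem (⟨r.length, r, rfl, rfl⟩ :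
    {n | ∃ l, wordProd k F l = wordProd k F r ∧ l.length = n}.Nonempty)
  obtain ⟨r', hr', hr'l, hr'len⟩ := exists_reduced_le l
  rw [len, ← hlen, ← (swapEquiv_of_wordProd_eq hr' hr (hr'l.trans hl)).length_eq]
  exact hr'len

lemma reduced_of_length_le_len {l : List (Fin k × Bool)}
    (h : l.length ≤ len (wordProd k F l)) : Reduced (commGraph F) l := by
  by_contra hl
  obtain ⟨l', hl', hlen⟩ := exists_shorter_of_not_reduced hl
  have := len_le_length hl'
  omega

lemma len_inv (x : Grp k F) : len x⁻¹ = len x := by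
  have key : ∀ x : Grp k F, len x⁻¹ ≤ len x := fun x => by
    obtain ⟨r, hr, rfl⟩ := exists_reduced x
    rw [len_wordProd_of_reduced hr, ← FreeGroup.invRev_length]
    exact len_le_length (wordProd_invRev r)
  exact (key x).antisymm (by simpa using key x⁻¹)

lemma Reduced.invRev {r : List (Fin k × Bool)} (hr : Reduced (commGraph F) r) :
    Reduced (commGraph F) (FreeGroup.invRev r) :=
  reduced_of_length_le_len <| by
    rw [wordProd_invRev, len_inv, len_wordProd_of_reduced hr, FreeGroup.invRev_length]

lemma occurs_iff_mem {r : List (Fin k × Bool)} (hr : Reduced (commGraph F) r)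
    (c : Fin k × Bool) : Occurs c (wordProd k F r) ↔ c ∈ r := by
  have hex : ∃ l, MinWord (wordProd k F r) l := ⟨r, rfl, (len_wordProd_of_reduced hr).symm⟩
  obtain ⟨hl, hlen⟩ := hex.choose_spec
  have hred := reduced_of_length_le_len (hlen.trans_le (by rw [hl]))
  rw [Occurs, symCount, dif_pos hex, List.count_pos_iff,
    (swapEquiv_of_wordProd_eq hred hr hl).perm.mem_iff]

lemma maxSym_wordProd_append_singleton {u : List (Fin k × Bool)} {c : Fin k × Bool}
    (h : Reduced (commGraph F) (u ++ [c])) : MaxSym c (wordProd k F (u ++ [c])) := by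
  have hsym : len (sym k F c) = 1 := by
    simpa using len_wordProd_of_reduced (F := F) (reduced_singleton c)
  have hu := len_wordProd_of_reduced h.of_append.1
  have huc := len_wordProd_of_reduced h
  simp only [wordProd_append, wordProd_cons, wordProd_nil, mul_one, List.length_append,
    List.length_singleton] at huc
  simp only [MaxSym, le, wordProd_append, wordProd_cons, wordProd_nil, mul_one,
    mul_inv_cancel_right, inv_mul_cancel_left, hsym, huc, hu]

/-- Cancel a reduced word of `X c` against one of `p⁻¹`. Were `c` cancelled, it would be a maximal
symbol of `p`; so it survives at the end of the uncancelled part of `X c`, and dropping it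
shortens the reduced product by one letter. -/
lemma len_mul_inv_le_of_not_maxSym {X : List (Fin k × Bool)} {c : Fin k × Bool} {p : Grp k F}
    (hX : Reduced (commGraph F) (X ++ [c])) (hc : ¬ MaxSym c p) :
    len (wordProd k F X * p⁻¹) ≤ len (wordProd k F (X ++ [c]) * p⁻¹) := by
  obtain ⟨P, hP, rfl⟩ := exists_reduced p
  obtain ⟨A, S, B, hA, hB, hAB⟩ := exists_reduced_append_cancel hX hP.invRev
  have hPinv : (wordProd k F P)⁻¹ = (wordProd k F S)⁻¹ * wordProd k F B := by
    rw [← wordProd_invRev, hB.wordProd_eq, wordProd_append, wordProd_invRev]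
  rcases hA.append_singleton_cases with ⟨S₀, hS, -⟩ | ⟨A₀, hA₀, hX₀⟩
  · have hPS :
        SwapEquiv (letterGraph (commGraph F)) P (FreeGroup.invRev B ++ S₀ ++ [c]) := by
      have hPBS := hB.invRev
      rw [FreeGroup.invRev_invRev, FreeGroup.invRev_append, FreeGroup.invRev_invRev] at hPBS
      simpa using hPBS.trans (hS.append_left _)
    refine (hc ?_).elim
    rw [hPS.wordProd_eq]
    exact maxSym_wordProd_append_singleton (hPS.reduced_iff.1 hP)
  · calc len (wordProd k F X * (wordProd k F P)⁻¹)
        = len (wordProd k F (A₀ ++ B)) := by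
          rw [hX₀.wordProd_eq, hPinv]
          simp [mul_assoc]
      _ ≤ A₀.length + B.length := (len_le_length rfl).trans_eq (List.length_append ..)
      _ ≤ (A ++ B).length := by simp [hA₀.length_eq]
      _ = len (wordProd k F (X ++ [c]) * (wordProd k F P)⁻¹) := by
          rw [← len_wordProd_of_reduced hAB, hA.wordProd_eq, hPinv]
          simp [mul_assoc]

lemma len_mul_inv_le_of_reduced_append {α : Fin k × Bool} {p : Grp k F}
    (hp : ∀ β, MaxSym β p → β = α) {X Z : List (Fin k × Bool)}
    (hXZ : Reduced (commGraph F) (X ++ Z)) (hZ : α ∉ Z) :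
    len (wordProd k F X * p⁻¹) ≤ len (wordProd k F (X ++ Z) * p⁻¹) := by
  induction Z generalizing X with
  | nil => simp
  | cons c Z ih =>
    have hc : ¬ MaxSym c p := fun h => hZ (hp c h ▸ List.mem_cons_self)
    rw [← List.singleton_append, ← List.append_assoc] at hXZ ⊢
    exact (len_mul_inv_le_of_not_maxSym hXZ.of_append.1 hc).trans
      (ih hXZ fun h => hZ (List.mem_cons_of_mem c h))

end GraphGroup

theorem stmt15_general {k : ℕ} {F : Set (Sym2 (Fin k))}
    (α : Fin k × Bool) (x y : Grp k F)
    (hxy : le x y) (hocc : ¬ Occurs α (x⁻¹ * y))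
    (p : Grp k F) (hp : AlphaPeak α p) :
    len (x * p⁻¹) ≤ len (y * p⁻¹) := by
  obtain ⟨X, hX, rfl⟩ := exists_reduced x
  obtain ⟨Z, hZ, hZxy⟩ := exists_reduced ((wordProd k F X)⁻¹ * y)
  have hy : wordProd k F (X ++ Z) = y := by rw [wordProd_append, hZxy, mul_inv_cancel_left]
  have hXZ : Reduced (commGraph F) (X ++ Z) := reduced_of_length_le_len <| by
    rw [hy, hxy, ← hZxy, len_wordProd_of_reduced hX, len_wordProd_of_reduced hZ,
      List.length_append]
  rw [← hZxy, occurs_iff_mem hZ] at hocc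
  rw [← hy]
  exact len_mul_inv_le_of_reduced_append hp.2 hXZ hocc

/-- if `x ≤ y` and `α` does not occur in `x⁻¹y`, then
`|xp⁻¹| ≤ |yp⁻¹|` for each `α`-peak `p`. -/
theorem stmt15 {k : ℕ} (hk : 1 ≤ k) {F : Set (Sym2 (Fin k))}
    (α : Fin k × Bool) (x y : Grp k F)
    (hxy : le x y) (hocc : ¬ Occurs α (x⁻¹ * y))
    (p : Grp k F) (hp : AlphaPeak α p) :
    len (x * p⁻¹) ≤ len (y * p⁻¹) :=
  stmt15_general α x y hxy hocc p hp

end GraphGroupPaper
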